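/- For every f ∈ C[0,1] and n ≥ 1, the Kantorovich polynomials satisfy ‖Kₙ(f) − f‖_{L¹[0,1]} ≤ 2·ω(f, 1/√(6(n+1))), where ω is the modulus of continuity of f. -/

import Mathlib

/-! The estimate is the Shisha–Mond argument for the positive linear operator `K n`, which
reproduces constants. Cutting `[x, y]` into `⌊|x - y| / δ⌋ + 1` pieces of length at most `δ` gives
`|f t - f x| ≤ ω(δ) (1 + (t - x)² / δ²)`, and applying `K n` in `t` yields
`|K n f x - f x| ≤ ω(δ) (1 + K n ((· - x)²) x / δ²)`. By the Bernstein moment identities this second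
moment is `((n - 1) x (1 - x) + 1/3) / (n + 1)²`, whose integral over `[0, 1]` is
`1 / (6 (n + 1)) = δ²`; integrating the pointwise bound therefore gives `2 ω(δ)`. -/

open Set MeasureTheory

/-- The Kantorovich polynomial operator. -/
noncomputable def K (n : ℕ) (f : ℝ → ℝ) (x : ℝ) : ℝ :=
  ((n : ℝ) + 1) * ∑ k ∈ Finset.range (n + 1),
    (n.choose k : ℝ) * x ^ k * (1 - x) ^ (n - k) *
      ∫ t in ((k : ℝ) / ((n : ℝ) + 1))..(((k : ℝ) + 1) / ((n : ℝ) + 1)), f t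

/-- Modulus of continuity of `f` on a set `S`. -/
noncomputable def modulus (f : ℝ → ℝ) (S : Set ℝ) (δ : ℝ) : ℝ :=
  sSup {d : ℝ | ∃ x ∈ S, ∃ y ∈ S, |x - y| ≤ δ ∧ d = |f x - f y|}

section Modulus

variable {f : ℝ → ℝ} {S : Set ℝ} {δ x y : ℝ}

theorem modulus_nonneg (f : ℝ → ℝ) (S : Set ℝ) (δ : ℝ) : 0 ≤ modulus f S δ :=
  Real.sSup_nonneg <| by rintro d ⟨x, -, y, -, -, rfl⟩; exact abs_nonneg _

theorem abs_sub_le_modulus (hS : IsCompact S) (hf : ContinuousOn f S) (hx : x ∈ S) (hy : y ∈ S)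
    (hxy : |x - y| ≤ δ) : |f x - f y| ≤ modulus f S δ := by
  obtain ⟨C, hC⟩ := hS.exists_bound_of_continuousOn hf
  refine le_csSup ⟨C + C, ?_⟩ ⟨x, hx, y, hy, hxy, rfl⟩
  rintro d ⟨u, hu, v, hv, -, rfl⟩
  exact (abs_sub _ _).trans (add_le_add (hC u hu) (hC v hv))

theorem abs_sub_le_nat_mul_modulus (hS : IsCompact S) (hconv : Convex ℝ S) (hf : ContinuousOn f S)
    (hx : x ∈ S) (hy : y ∈ S) {m : ℕ} (hm : 0 < m) (hxy : |x - y| ≤ m * δ) :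
    |f x - f y| ≤ m * modulus f S δ := by
  have hm' : (0 : ℝ) < m := Nat.cast_pos.2 hm
  set p : ℕ → ℝ := fun i => x + ((i : ℝ) / m) • (y - x)
  have hp_mem : ∀ i ≤ m, p i ∈ S := fun i hi =>
    hconv.add_smul_sub_mem hx hy ⟨by positivity, div_le_one_of_le₀ (by exact_mod_cast hi) hm'.le⟩
  have hp_step : ∀ i, |p i - p (i + 1)| ≤ δ := fun i => by
    have : p i - p (i + 1) = (x - y) / m := by simp only [p, smul_eq_mul]; push_cast; field_simp; ring
    rw [this, abs_div, abs_of_pos hm', div_le_iff₀ hm', mul_comm]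
    exact hxy
  have hp0 : p 0 = x := by simp [p]
  have hpm : p m = y := by simp [p, hm'.ne']
  calc |f x - f y| = |∑ i ∈ Finset.range m, (f (p i) - f (p (i + 1)))| := by
        rw [Finset.sum_range_sub' (fun i => f (p i)), hp0, hpm]
    _ ≤ ∑ i ∈ Finset.range m, |f (p i) - f (p (i + 1))| := Finset.abs_sum_le_sum_abs _ _
    _ ≤ ∑ _i ∈ Finset.range m, modulus f S δ := Finset.sum_le_sum fun i hi =>
        abs_sub_le_modulus hS hf (hp_mem i (Finset.mem_range.1 hi).le)
          (hp_mem (i + 1) (Finset.mem_range.1 hi)) (hp_step i)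
    _ = m * modulus f S δ := by simp

theorem abs_sub_le_one_add_sq_div_mul_modulus (hS : IsCompact S) (hconv : Convex ℝ S)
    (hf : ContinuousOn f S) (hδ : 0 < δ) (hx : x ∈ S) (hy : y ∈ S) :
    |f x - f y| ≤ (1 + (x - y) ^ 2 / δ ^ 2) * modulus f S δ := by
  set r := |x - y| / δ
  have hr : 0 ≤ r := by positivity
  have hsteps : |x - y| ≤ ((⌊r⌋₊ + 1 : ℕ) : ℝ) * δ := by
    rw [← div_le_iff₀ hδ]; push_cast; exact (Nat.lt_floor_add_one r).le
  have hcount : ((⌊r⌋₊ + 1 : ℕ) : ℝ) ≤ 1 + (x - y) ^ 2 / δ ^ 2 := by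
    have hr2 : (x - y) ^ 2 / δ ^ 2 = r ^ 2 := by rw [div_pow, sq_abs]
    rw [hr2]; push_cast
    rcases lt_or_ge r 1 with h | h
    · simp [Nat.floor_eq_zero.2 h, sq_nonneg]
    · nlinarith [Nat.floor_le hr]
  exact (abs_sub_le_nat_mul_modulus hS hconv hf hx hy (Nat.succ_pos _) hsteps).trans
    (mul_le_mul_of_nonneg_right hcount (modulus_nonneg f S δ))

end Modulus

section Bernstein

open Polynomial

theorem sum_bernstein_eq_one (n : ℕ) (x : ℝ) :
    ∑ k ∈ Finset.range (n + 1), (n.choose k : ℝ) * x ^ k * (1 - x) ^ (n - k) = 1 := by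
  simpa [bernsteinPolynomial, eval_finsetSum] using
    congrArg (eval x) (bernsteinPolynomial.sum ℝ n)

theorem sum_mul_bernstein (n : ℕ) (x : ℝ) :
    ∑ k ∈ Finset.range (n + 1), (k : ℝ) * ((n.choose k : ℝ) * x ^ k * (1 - x) ^ (n - k)) =
      n * x := by
  simpa [bernsteinPolynomial, eval_finsetSum, mul_assoc] using
    congrArg (eval x) (bernsteinPolynomial.sum_smul ℝ n)

theorem sum_mul_sub_one_mul_bernstein (n : ℕ) (x : ℝ) :
    ∑ k ∈ Finset.range (n + 1),
        (k : ℝ) * ((k : ℝ) - 1) * ((n.choose k : ℝ) * x ^ k * (1 - x) ^ (n - k)) =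
      n * ((n : ℝ) - 1) * x ^ 2 := by
  have hcast : ∀ m : ℕ, ((m * (m - 1) : ℕ) : ℝ) = m * ((m : ℝ) - 1) := by
    rintro (_ | m) <;> simp
  have := congrArg (eval x) (bernsteinPolynomial.sum_mul_smul ℝ n)
  simp only [bernsteinPolynomial, eval_finsetSum, eval_mul, eval_pow, eval_natCast,
    eval_X, eval_sub, eval_one, nsmul_eq_mul, hcast] at this
  exact this

theorem choose_mul_pow_mul_pow_nonneg (n k : ℕ) {x : ℝ} (hx : x ∈ Icc (0 : ℝ) 1) :
    0 ≤ (n.choose k : ℝ) * x ^ k * (1 - x) ^ (n - k) := by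
  have := hx.2; have := hx.1; positivity

end Bernstein

section Kantorovich

variable {n : ℕ} {f g : ℝ → ℝ} {x : ℝ}

theorem uIcc_subset_Icc_zero_one {k : ℕ} (hk : k ∈ Finset.range (n + 1)) :
    uIcc ((k : ℝ) / ((n : ℝ) + 1)) (((k : ℝ) + 1) / ((n : ℝ) + 1)) ⊆ Icc 0 1 := by
  have hk : (k : ℝ) + 1 ≤ n + 1 := by exact_mod_cast Finset.mem_range.1 hk
  rw [uIcc_of_le (by gcongr; linarith)]
  exact Icc_subset_Icc (by positivity) (div_le_one_of_le₀ hk (by positivity))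

theorem K_add (hf : IntegrableOn f (Icc 0 1)) (hg : IntegrableOn g (Icc 0 1)) :
    K n (fun t => f t + g t) x = K n f x + K n g x := by
  simp only [K, ← mul_add, ← Finset.sum_add_distrib]
  congr 1
  refine Finset.sum_congr rfl fun k hk => ?_
  rw [intervalIntegral.integral_add ((hf.mono_set (uIcc_subset_Icc_zero_one hk)).intervalIntegrable)
    ((hg.mono_set (uIcc_subset_Icc_zero_one hk)).intervalIntegrable), mul_add]

theorem K_sub (hf : IntegrableOn f (Icc 0 1)) (hg : IntegrableOn g (Icc 0 1)) :
    K n (fun t => f t - g t) x = K n f x - K n g x := by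
  simp only [K, ← mul_sub, ← Finset.sum_sub_distrib]
  congr 1
  refine Finset.sum_congr rfl fun k hk => ?_
  rw [intervalIntegral.integral_sub ((hf.mono_set (uIcc_subset_Icc_zero_one hk)).intervalIntegrable)
    ((hg.mono_set (uIcc_subset_Icc_zero_one hk)).intervalIntegrable), mul_sub]

theorem K_const_mul (c : ℝ) : K n (fun t => c * f t) x = c * K n f x := by
  simp only [K, intervalIntegral.integral_const_mul, Finset.mul_sum]
  refine Finset.sum_congr rfl fun k _ => by ring

theorem K_const (c : ℝ) : K n (fun _ => c) x = c := by
  have hN : (n : ℝ) + 1 ≠ 0 := by positivity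
  have hlen : ∀ k : ℕ, ((k : ℝ) + 1) / ((n : ℝ) + 1) - (k : ℝ) / ((n : ℝ) + 1) = 1 / ((n : ℝ) + 1) :=
    fun k => by field_simp; ring
  simp only [K, intervalIntegral.integral_const, hlen, smul_eq_mul, ← Finset.sum_mul,
    sum_bernstein_eq_one]
  field_simp

theorem K_nonneg (hx : x ∈ Icc (0 : ℝ) 1) (hf : ∀ t ∈ Icc (0 : ℝ) 1, 0 ≤ f t) : 0 ≤ K n f x := by
  refine mul_nonneg (by positivity) (Finset.sum_nonneg fun k hk => mul_nonneg
    (choose_mul_pow_mul_pow_nonneg n k hx) ?_)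
  have hsub := uIcc_subset_Icc_zero_one hk
  rw [uIcc_of_le (by gcongr; linarith)] at hsub
  exact intervalIntegral.integral_nonneg (by gcongr; linarith) fun t ht => hf t (hsub ht)

theorem abs_K_le (hx : x ∈ Icc (0 : ℝ) 1) (hf : IntegrableOn f (Icc 0 1))
    (hg : IntegrableOn g (Icc 0 1)) (hfg : ∀ t ∈ Icc (0 : ℝ) 1, |f t| ≤ g t) :
    |K n f x| ≤ K n g x := by
  have hadd := K_nonneg (n := n) hx fun t ht => neg_le_iff_add_nonneg'.1 (abs_le.1 (hfg t ht)).1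
  have hsub := K_nonneg (n := n) hx fun t ht => sub_nonneg.2 (abs_le.1 (hfg t ht)).2
  rw [K_add hg hf] at hadd
  rw [K_sub hg hf] at hsub
  exact abs_le.2 ⟨by linarith, by linarith⟩

theorem continuous_K (n : ℕ) (f : ℝ → ℝ) : Continuous (K n f) := by
  unfold K; fun_prop

theorem K_sq_sub_self (n : ℕ) (x : ℝ) :
    K n (fun t => (t - x) ^ 2) x = (((n : ℝ) - 1) * x * (1 - x) + 1 / 3) / ((n : ℝ) + 1) ^ 2 := by
  have hN : (n : ℝ) + 1 ≠ 0 := by positivity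
  have hint : ∀ a b : ℝ, ∫ t in a..b, (t - x) ^ 2 = ((b - x) ^ 3 - (a - x) ^ 3) / 3 := fun a b => by
    rw [intervalIntegral.integral_comp_sub_right (fun u => u ^ 2), integral_pow]; norm_num
  -- expand each cell integral in the moments `1, k, k (k - 1)` of the Bernstein weights
  have hcell : ∀ k ∈ Finset.range (n + 1),
      (n.choose k : ℝ) * x ^ k * (1 - x) ^ (n - k) *
        ∫ t in ((k : ℝ) / ((n : ℝ) + 1))..(((k : ℝ) + 1) / ((n : ℝ) + 1)), (t - x) ^ 2 =
      1 / ((n : ℝ) + 1) ^ 3 * ((k : ℝ) * ((k : ℝ) - 1) * ((n.choose k : ℝ) * x ^ k * (1 - x) ^ (n - k)))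
      + (2 / ((n : ℝ) + 1) ^ 3 - 2 * x / ((n : ℝ) + 1) ^ 2) *
          ((k : ℝ) * ((n.choose k : ℝ) * x ^ k * (1 - x) ^ (n - k)))
      + (x ^ 2 / ((n : ℝ) + 1) - x / ((n : ℝ) + 1) ^ 2 + 1 / (3 * ((n : ℝ) + 1) ^ 3)) *
          ((n.choose k : ℝ) * x ^ k * (1 - x) ^ (n - k)) := fun k _ => by
    rw [hint]; field_simp; ring
  rw [K, Finset.sum_congr rfl hcell]
  simp only [Finset.sum_add_distrib, ← Finset.mul_sum, sum_mul_sub_one_mul_bernstein,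
    sum_mul_bernstein, sum_bernstein_eq_one]
  field_simp
  ring

theorem integral_K_sq_sub_self (n : ℕ) :
    ∫ x in (0 : ℝ)..1, K n (fun t => (t - x) ^ 2) x = 1 / (6 * ((n : ℝ) + 1)) := by
  have hpoly : ∀ x : ℝ, K n (fun t => (t - x) ^ 2) x =
      (((n : ℝ) - 1) * x - ((n : ℝ) - 1) * x ^ 2 + 1 / 3) / ((n : ℝ) + 1) ^ 2 := fun x => by
    rw [K_sq_sub_self]; ring
  have hi : ∀ {h : ℝ → ℝ}, Continuous h → IntervalIntegrable h volume 0 1 :=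
    fun h => h.intervalIntegrable _ _
  simp only [hpoly]
  rw [intervalIntegral.integral_div, intervalIntegral.integral_add (hi (by fun_prop)) (hi (by fun_prop)),
    intervalIntegral.integral_sub (hi (by fun_prop)) (hi (by fun_prop)),
    intervalIntegral.integral_const_mul, intervalIntegral.integral_const_mul, integral_id, integral_pow]
  simp
  field_simp
  ring

theorem abs_K_sub_self_le (hf : ContinuousOn f (Icc 0 1)) {δ : ℝ} (hδ : 0 < δ)
    (hx : x ∈ Icc (0 : ℝ) 1) :
    |K n f x - f x| ≤
      modulus f (Icc 0 1) δ * (1 + K n (fun t => (t - x) ^ 2) x / δ ^ 2) := by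
  have hsq : IntegrableOn (fun t => (t - x) ^ 2) (Icc 0 1) :=
    (continuous_id.sub continuous_const).pow 2 |>.integrableOn_Icc
  have hmod : ∀ t ∈ Icc (0 : ℝ) 1, |f t - f x| ≤
      modulus f (Icc 0 1) δ + modulus f (Icc 0 1) δ / δ ^ 2 * (t - x) ^ 2 := fun t ht =>
    (abs_sub_le_one_add_sq_div_mul_modulus isCompact_Icc (convex_Icc 0 1) hf hδ ht hx).trans_eq
      (by ring)
  calc |K n f x - f x| = |K n (fun t => f t - f x) x| := by
        rw [K_sub hf.integrableOn_Icc continuous_const.integrableOn_Icc, K_const]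
    _ ≤ K n (fun t => modulus f (Icc 0 1) δ + modulus f (Icc 0 1) δ / δ ^ 2 * (t - x) ^ 2) x :=
        abs_K_le hx (hf.sub continuousOn_const).integrableOn_Icc
          (continuous_const.integrableOn_Icc.add (hsq.const_mul _)) hmod
    _ = modulus f (Icc 0 1) δ * (1 + K n (fun t => (t - x) ^ 2) x / δ ^ 2) := by
        rw [K_add continuous_const.integrableOn_Icc (hsq.const_mul _), K_const, K_const_mul]
        ring

end Kantorovich

theorem kantorovich_L1_estimate_general (f : ℝ → ℝ) (hf : ContinuousOn f (Icc 0 1))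
    (n : ℕ) :
    ∫ x in (0:ℝ)..1, |K n f x - f x| ≤
      2 * modulus f (Icc 0 1) (1 / Real.sqrt (6 * ((n : ℝ) + 1))) := by
  set δ := 1 / Real.sqrt (6 * ((n : ℝ) + 1))
  have hδ : 0 < δ := by positivity
  have hδsq : δ ^ 2 = 1 / (6 * ((n : ℝ) + 1)) := by
    rw [div_pow, one_pow, Real.sq_sqrt (by positivity)]
  have hmoment : Continuous fun x => K n (fun t => (t - x) ^ 2) x := by
    simp only [K_sq_sub_self]; fun_prop
  calc ∫ x in (0:ℝ)..1, |K n f x - f x|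
      ≤ ∫ x in (0:ℝ)..1, modulus f (Icc 0 1) δ * (1 + K n (fun t => (t - x) ^ 2) x / δ ^ 2) :=
        intervalIntegral.integral_mono_on zero_le_one
          (((continuous_K n f).continuousOn.sub hf).abs.intervalIntegrable_of_Icc zero_le_one)
          ((continuous_const.mul (continuous_const.add (hmoment.div_const _))).intervalIntegrable _ _)
          fun x hx => abs_K_sub_self_le hf hδ hx
    _ = modulus f (Icc 0 1) δ * (1 + (∫ x in (0:ℝ)..1, K n (fun t => (t - x) ^ 2) x) / δ ^ 2) := by
        rw [intervalIntegral.integral_const_mul, intervalIntegral.integral_add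
          intervalIntegrable_const ((hmoment.div_const _).intervalIntegrable _ _),
          intervalIntegral.integral_div]
        simp
    _ = 2 * modulus f (Icc 0 1) δ := by
        rw [integral_K_sq_sub_self, ← hδsq, div_self (pow_pos hδ 2).ne']
        ring

/-- Quantitative Korovkin estimate for Kantorovich polynomials in `L¹[0,1]`. -/
theorem kantorovich_L1_estimate (f : ℝ → ℝ) (hf : ContinuousOn f (Icc 0 1))
    (n : ℕ) (hn : 1 ≤ n) :
    ∫ x in (0:ℝ)..1, |K n f x - f x| ≤
      2 * modulus f (Icc 0 1) (1 / Real.sqrt (6 * ((n : ℝ) + 1))) :=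
  kantorovich_L1_estimate_general f hf n
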